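/- arXiv:cs/0412098 — 3 statements merged into one kernel-verified Lean document; each statement's English description precedes it below -/
import Mathlib

section
/- NGD violates the triangle inequality: let N > 1 be a real number and set f(x) = f(y) = f(x,z) = f(y,z) = √N, f(z) = 2√N, and f(x,y) arbitrarily small (in the limit f(x,y) → 0 the distance NGD(x,y) → ∞). Then NGD(x,z) = NGD(z,y) = 2/log N (computing NGD(x,z) = (log f(z) − log f(x,z))/(log N − log f(x,z)) with the convention that the max/min are taken over {f(x), f(z)}), so for every N > 1 and every finite bound B there is a choice of f(x,y) making NGD(x,y) > NGD(x,z) + NGD(z,y) = 4/log N, violating the triangle inequality. -/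
/-!
With `L = log₂ N` we have `log₂ √N = L / 2` and `log₂ (2√N) = 1 + L / 2`, so both
`NGD(x,z)` and `NGD(z,y)` equal `1 / (L / 2) = 2 / L`. On the other hand, for `f(x) = f(y)`
the distance `NGD(x,y) = (log₂ f(x) - log₂ f(x,y)) / (L - log₂ f(x))` is an affine function
of `log₂ f(x,y)` with nonzero slope, so it takes every real value as `f(x,y)` ranges over
the positive reals.
-/

open Real

/-- The normalized Google distance with base-2 logarithms, for a corpus of `N` pages,
page counts `a = f(u)`, `b = f(v)` and joint count `ab = f(u,v)`. -/
noncomputable def ngd (N a b ab : ℝ) : ℝ :=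
  (max (logb 2 a) (logb 2 b) - logb 2 ab) / (logb 2 N - min (logb 2 a) (logb 2 b))

theorem ngd_comm (N a b ab : ℝ) : ngd N a b ab = ngd N b a ab := by
  rw [ngd, ngd, max_comm, min_comm]

theorem ngd_self_rpow (N a t : ℝ) :
    ngd N a a (2 ^ t) = (logb 2 a - t) / (logb 2 N - logb 2 a) := by
  rw [ngd, max_self, min_self, logb_rpow two_pos (by norm_num)]

theorem exists_ngd_self_eq {N a : ℝ} (h : logb 2 a ≠ logb 2 N) (M : ℝ) :
    ∃ ab : ℝ, 0 < ab ∧ ngd N a a ab = M := by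
  have hd : logb 2 N - logb 2 a ≠ 0 := sub_ne_zero.mpr h.symm
  refine ⟨2 ^ (logb 2 a - M * (logb 2 N - logb 2 a)), by positivity, ?_⟩
  rw [ngd_self_rpow, sub_sub_cancel, mul_div_cancel_right₀ M hd]

theorem logb_sqrt (b : ℝ) {x : ℝ} (hx : 0 ≤ x) : logb b (√x) = logb b x / 2 := by
  rw [logb, log_sqrt hx, logb, div_right_comm]

theorem ngd_sqrt_two_mul_sqrt {N : ℝ} (hN : 1 < N) :
    ngd N (√N) (2 * √N) (√N) = 2 / logb 2 N := by
  have hL : 0 < logb 2 N := logb_pos one_lt_two hN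
  have hsqrt : logb 2 (√N) = logb 2 N / 2 := logb_sqrt 2 (by linarith)
  have htwo : logb 2 (2 * √N) = 1 + logb 2 N / 2 := by
    rw [logb_mul two_ne_zero (sqrt_pos.mpr (by linarith)).ne', hsqrt,
      logb_self_eq_one one_lt_two]
  rw [ngd, hsqrt, htwo, max_eq_right (by linarith), min_eq_left (by linarith)]
  field_simp
  ring

/-- `NGD` violates the triangle inequality: with `f(x)=f(y)=f(x,z)=f(y,z)=√N`
and `f(z)=2√N` (base-2 logarithms), `NGD(x,z) = NGD(z,y) = 2/log₂ N`, and
`f(x,y)` can be chosen to make `NGD(x,y)` exceed any bound `B`, in particular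
exceeding `NGD(x,z) + NGD(z,y) = 4/log₂ N`. -/
theorem ngd_triangle_violation (N : ℝ) (hN : 1 < N) (B : ℝ) :
    let NGD : ℝ → ℝ → ℝ → ℝ := fun a b ab =>
      (max (Real.logb 2 a) (Real.logb 2 b) - Real.logb 2 ab) /
        (Real.logb 2 N - min (Real.logb 2 a) (Real.logb 2 b))
    NGD (Real.sqrt N) (2 * Real.sqrt N) (Real.sqrt N) = 2 / Real.logb 2 N ∧
    NGD (Real.sqrt N) (2 * Real.sqrt N) (Real.sqrt N) +
        NGD (2 * Real.sqrt N) (Real.sqrt N) (Real.sqrt N) = 4 / Real.logb 2 N ∧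
    ∃ fxy : ℝ, 0 < fxy ∧
      NGD (Real.sqrt N) (Real.sqrt N) fxy > B ∧
      NGD (Real.sqrt N) (Real.sqrt N) fxy >
        NGD (Real.sqrt N) (2 * Real.sqrt N) (Real.sqrt N) +
          NGD (2 * Real.sqrt N) (Real.sqrt N) (Real.sqrt N) := by
  intro NGD
  rw [show NGD = ngd N from rfl]
  have hxz := ngd_sqrt_two_mul_sqrt hN
  have hzy : ngd N (2 * √N) (√N) (√N) = 2 / logb 2 N := ngd_comm .. ▸ hxz
  have hsum : ngd N (√N) (2 * √N) (√N) + ngd N (2 * √N) (√N) (√N) = 4 / logb 2 N := by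
    rw [hxz, hzy]
    ring
  have hsqrt_ne : logb 2 (√N) ≠ logb 2 N := by
    rw [logb_sqrt 2 (by linarith)]
    linarith [logb_pos one_lt_two hN]
  obtain ⟨fxy, hpos, hfxy⟩ := exists_ngd_self_eq hsqrt_ne (max B (4 / logb 2 N) + 1)
  refine ⟨hxz, hsum, fxy, hpos, ?_, ?_⟩
  · linarith [le_max_left B (4 / logb 2 N)]
  · linarith [le_max_right B (4 / logb 2 N)]
end

section
/- The information distance E(x,y) = K(x,y) − min{K(x), K(y)} (with K an arbitrary nonnegative real-valued function on strings and pairs satisfying symmetry K(x,y) = K(y,x) and subadditivity K(x,y) ≤ K(x,z) + K(z,y) − K(z) for all x,y,z, together with K(x,x) = K(x) and K(x,y) ≥ max{K(x),K(y)}) satisfies: E(x,x) = 0, E(x,y) = E(y,x), E(x,y) ≥ 0, and E(x,y) ≤ E(x,z) + E(z,y). -/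
/-! The only nontrivial axiom is the triangle inequality. Subadditivity gives
`K(x,y) ≤ K(x,z) + K(z,y) - K(z)`, so it remains to compare the `min` terms, which is the
elementary inequality `min a c + min c b ≤ c + min a b`. -/

theorem min_add_min_le_add_min {β : Type*} [AddCommMonoid β] [LinearOrder β]
    [IsOrderedAddMonoid β] (a b c : β) : min a c + min c b ≤ c + min a b := by
  rcases le_total a b with hab | hba
  · rw [min_eq_left hab, add_comm c]
    exact add_le_add (min_le_left a c) (min_le_left c b)
  · rw [min_eq_right hba]
    exact add_le_add (min_le_right a c) (min_le_right c b)

section InfoDist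

variable {α β : Type*} [AddCommGroup β] [LinearOrder β] (K : α → β) (K2 : α → α → β)

def infoDist (x y : α) : β :=
  K2 x y - min (K x) (K y)

theorem infoDist_self (hdiag : ∀ x, K2 x x = K x) (x : α) : infoDist K K2 x x = 0 := by
  rw [infoDist, hdiag, min_self, sub_self]

theorem infoDist_comm (hsym : ∀ x y, K2 x y = K2 y x) (x y : α) :
    infoDist K K2 x y = infoDist K K2 y x := by
  rw [infoDist, infoDist, hsym, min_comm]

theorem infoDist_nonneg [IsOrderedAddMonoid β]
    (hmax : ∀ x y, max (K x) (K y) ≤ K2 x y) (x y : α) :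
    0 ≤ infoDist K K2 x y :=
  sub_nonneg.2 (min_le_max.trans (hmax x y))

theorem infoDist_triangle [IsOrderedAddMonoid β]
    (hsub : ∀ x y z, K2 x y + K z ≤ K2 x z + K2 z y) (x y z : α) :
    infoDist K K2 x y ≤ infoDist K K2 x z + infoDist K K2 z y := by
  unfold infoDist
  calc K2 x y - min (K x) (K y)
      ≤ K2 x y + K z - (min (K x) (K z) + min (K z) (K y)) := by
        rw [add_sub_assoc, sub_eq_add_neg, add_le_add_iff_left, neg_le_sub_iff_le_add]
        exact min_add_min_le_add_min (K x) (K y) (K z)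
    _ ≤ K2 x z + K2 z y - (min (K x) (K z) + min (K z) (K y)) :=
        sub_le_sub_right (hsub x y z) _
    _ = K2 x z - min (K x) (K z) + (K2 z y - min (K z) (K y)) := by abel

end InfoDist

theorem information_distance_metric_general
    {α : Type*} (K : α → ℝ) (K2 : α → α → ℝ)
    (hdiag : ∀ x, K2 x x = K x)
    (hsym : ∀ x y, K2 x y = K2 y x)
    (hmax : ∀ x y, max (K x) (K y) ≤ K2 x y)
    (hsub : ∀ x y z, K2 x y + K z ≤ K2 x z + K2 z y) :
    (∀ x, K2 x x - min (K x) (K x) = 0) ∧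
    (∀ x y, K2 x y - min (K x) (K y) = K2 y x - min (K y) (K x)) ∧
    (∀ x y, 0 ≤ K2 x y - min (K x) (K y)) ∧
    (∀ x y z, K2 x y - min (K x) (K y) ≤
      (K2 x z - min (K x) (K z)) + (K2 z y - min (K z) (K y))) :=
  ⟨infoDist_self K K2 hdiag, infoDist_comm K K2 hsym, infoDist_nonneg K K2 hmax,
    infoDist_triangle K K2 hsub⟩

/-- The information distance `E(x,y) = K(x,y) − min{K(x),K(y)}` is a metric
up to identity of indiscernibles, given the abstract axioms on `K`. -/
theorem information_distance_metric
    {α : Type*} (K : α → ℝ) (K2 : α → α → ℝ)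
    (hK0 : ∀ x, 0 ≤ K x) (hK20 : ∀ x y, 0 ≤ K2 x y)
    (hdiag : ∀ x, K2 x x = K x)
    (hsym : ∀ x y, K2 x y = K2 y x)
    (hmax : ∀ x y, max (K x) (K y) ≤ K2 x y)
    (hsub : ∀ x y z, K2 x y + K z ≤ K2 x z + K2 z y) :
    (∀ x, K2 x x - min (K x) (K x) = 0) ∧
    (∀ x y, K2 x y - min (K x) (K y) = K2 y x - min (K y) (K x)) ∧
    (∀ x y, 0 ≤ K2 x y - min (K x) (K y)) ∧
    (∀ x y z, K2 x y - min (K x) (K y) ≤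
      (K2 x z - min (K x) (K z)) + (K2 z y - min (K z) (K y))) :=
  information_distance_metric_general K K2 hdiag hsym hmax hsub
end

section
/- Upper bound on NGD via individual distances (Theorem 2 arithmetic core): suppose G(x,y) ≤ G_i(x,y) + log(N/N_i), G_i(x) − log(2k) ≤ G(x), and G_i(y) − log(2k) ≤ G(y), with max{G(x), G(y)} > 0 and max{G_i(x), G_i(y)} > 0 and G_i(x,y) ≥ max{G_i(x), G_i(y)} ≥ min{G_i(x),G_i(y)} ≥ 0. Then NGD(x,y) ≤ β·NGD_i(x,y) + γ where NGD(x,y) = (G(x,y) − min{G(x),G(y)})/max{G(x),G(y)}, NGD_i is the analogous expression in G_i, β = max{G_i(x),G_i(y)}/max{G(x),G(y)}, and γ = (min{G_i(x),G_i(y)} − min{G(x),G(y)} + log(N/N_i))/max{G(x),G(y)}. -/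
theorem ngd_universality_core_general
    (Gxy Gx Gy Gixy Gix Giy N Ni : ℝ)
    (h1 : Gxy ≤ Gixy + Real.log (N / Ni))
    (hmax : 0 < max Gx Gy) (himax : 0 < max Gix Giy) :
    (Gxy - min Gx Gy) / max Gx Gy ≤
      (max Gix Giy / max Gx Gy) * ((Gixy - min Gix Giy) / max Gix Giy) +
        (min Gix Giy - min Gx Gy + Real.log (N / Ni)) / max Gx Gy := by
  rw [div_mul_div_cancel₀' himax.ne', ← add_div]
  exact div_le_div_of_nonneg_right (by linarith) hmax.le

/-- Arithmetic core of the universality theorem for `NGD`: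
`NGD(x,y) ≤ β·NGD_i(x,y) + γ`. -/
theorem ngd_universality_core
    (Gxy Gx Gy Gixy Gix Giy N Ni k : ℝ)
    (hNi : 0 < Ni) (hNNi : Ni ≤ N) (hk : 1 ≤ k)
    (h1 : Gxy ≤ Gixy + Real.log (N / Ni))
    (h2 : Gix - Real.log (2 * k) ≤ Gx)
    (h3 : Giy - Real.log (2 * k) ≤ Gy)
    (hmax : 0 < max Gx Gy) (himax : 0 < max Gix Giy)
    (hGi : max Gix Giy ≤ Gixy) (hmin : 0 ≤ min Gix Giy) :
    (Gxy - min Gx Gy) / max Gx Gy ≤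
      (max Gix Giy / max Gx Gy) * ((Gixy - min Gix Giy) / max Gix Giy) +
        (min Gix Giy - min Gx Gy + Real.log (N / Ni)) / max Gx Gy :=
  ngd_universality_core_general Gxy Gx Gy Gixy Gix Giy N Ni h1 hmax himax
end
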